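/- Every monotone determined space that is locally hypercompact has weak one-step closure; that is, if X is a monotone determined locally hypercompact space, then Â = cl(A) for every subset A ⊆ X. -/

import Mathlib

open Set Topology

universe u v

variable {X : Type u}

/-- The specialization order: `x ≤ y` iff `x` lies in the closure of `{y}`. -/
def sle [TopologicalSpace X] (x y : X) : Prop := x ∈ closure ({y} : Set X)

/-- `↑A` with respect to the specialization order. -/
def upSet [TopologicalSpace X] (A : Set X) : Set X := {x | ∃ a ∈ A, sle a x}

/-- `↓A` with respect to the specialization order. -/
def downSet [TopologicalSpace X] (A : Set X) : Set X := {x | ∃ a ∈ A, sle x a}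

/-- A subset is directed: nonempty and any two elements have an upper bound in it. -/
def DirSet [TopologicalSpace X] (D : Set X) : Prop :=
  D.Nonempty ∧ ∀ a ∈ D, ∀ b ∈ D, ∃ c ∈ D, sle a c ∧ sle b c

/-- `D →_τ x`: every open set containing `x` meets `D`. -/
def DConv [TopologicalSpace X] (D : Set X) (x : X) : Prop :=
  ∀ U : Set X, IsOpen U → x ∈ U → (D ∩ U).Nonempty

/-- Monotone determined open set. -/
def MDOpen [TopologicalSpace X] (U : Set X) : Prop :=
  ∀ D : Set X, DirSet D → ∀ x ∈ U, DConv D x → (D ∩ U).Nonempty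

/-- Monotone determined space: every monotone determined open set is open. -/
def MonDet (X : Type u) [TopologicalSpace X] : Prop :=
  ∀ U : Set X, MDOpen U → IsOpen U

/-- `x ≪_d y`. -/
def dwb [TopologicalSpace X] (x y : X) : Prop :=
  ∀ D : Set X, DirSet D → DConv D y → ∃ d ∈ D, sle x d

/-- `⇓_d x = {y | y ≪_d x}`. -/
def dDown [TopologicalSpace X] (x : X) : Set X := {y | dwb y x}

/-- `⇑_d x = {y | x ≪_d y}`. -/
def dUp [TopologicalSpace X] (x : X) : Set X := {y | dwb x y}

/-- c-space. -/
def CSpace (X : Type u) [TopologicalSpace X] : Prop :=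
  ∀ U : Set X, IsOpen U → ∀ y ∈ U, ∃ x : X, y ∈ interior (upSet {x}) ∧ upSet {x} ⊆ U

/-- Locally hypercompact space. -/
def LocallyHypercompact (X : Type u) [TopologicalSpace X] : Prop :=
  ∀ U : Set X, IsOpen U → ∀ x ∈ U, ∃ F : Set X, F.Finite ∧ F.Nonempty ∧
    x ∈ interior (upSet F) ∧ upSet F ⊆ U

/-- `A^{↓≪} = {x ∈ A : ⇓_d x ∩ A ≠ ∅}`. -/
def lowApprox [TopologicalSpace X] (A : Set X) : Set X :=
  {x | x ∈ A ∧ (dDown x ∩ A).Nonempty}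

/-- `A^{↑≪} = {x : ⇓_d x ⊆ ↓A}`. -/
def upApprox [TopologicalSpace X] (A : Set X) : Set X :=
  {x | dDown x ⊆ downSet A}

/-- `Ã = {x : ∃ directed D ⊆ ↓A ∩ ↓x with D →_τ x}`. -/
def tilde [TopologicalSpace X] (A : Set X) : Set X :=
  {x | ∃ D : Set X, DirSet D ∧ D ⊆ downSet A ∩ downSet {x} ∧ DConv D x}

/-- `Â = {x : ∃ directed D ⊆ ↓A with D →_τ x}`. -/
def hatSet [TopologicalSpace X] (A : Set X) : Set X :=
  {x | ∃ D : Set X, DirSet D ∧ D ⊆ downSet A ∧ DConv D x}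

/-- One-step closure. -/
def OneStepClosure (X : Type u) [TopologicalSpace X] : Prop :=
  ∀ A : Set X, tilde A = closure A

/-- Weak one-step closure. -/
def WeakOneStepClosure (X : Type u) [TopologicalSpace X] : Prop :=
  ∀ A : Set X, hatSet A = closure A

/-- d-meet continuous space. -/
def DMeetCont (X : Type u) [TopologicalSpace X] : Prop :=
  MonDet X ∧ ∀ (D : Set X) (x : X), DirSet D → DConv D x →
    x ∈ closure (downSet D ∩ downSet {x})

/-- An ideal on `J`: closed under subsets and finite unions. -/
def IsIdeal {J : Type v} (I : Set (Set J)) : Prop :=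
  (∀ A ∈ I, ∀ B : Set J, B ⊆ A → B ∈ I) ∧ ∀ A ∈ I, ∀ B ∈ I, A ∪ B ∈ I

/-- IS-convergence of a net with respect to an ideal. -/
def ISConv [TopologicalSpace X] {J : Type v} (xj : J → X) (I : Set (Set J)) (x : X) : Prop :=
  ∃ D : Set X, DirSet D ∧ DConv D x ∧ ∀ d ∈ D, {j | ¬ sle d (xj j)} ∈ I

/-- I-convergence of a net with respect to an (explicit) topology. -/
def IConvT {J : Type v} (t : TopologicalSpace X) (xj : J → X) (I : Set (Set J)) (x : X) : Prop :=
  ∀ U : Set X, t.IsOpen U → x ∈ U → {j | xj j ∉ U} ∈ I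

/-- ISL-convergence. -/
def ISLConv [TopologicalSpace X] {J : Type v} (xj : J → X) (I : Set (Set J)) (x : X) : Prop :=
  ISConv xj I x ∧ ∀ y : X, {j | ¬ sle y (xj j)} ∈ I → sle y x

/-- A directed family of nonempty finite subsets (Smyth preorder). -/
def DirFam [TopologicalSpace X] (F : Set (Set X)) : Prop :=
  (∀ G ∈ F, G.Finite ∧ G.Nonempty) ∧
  ∀ G1 ∈ F, ∀ G2 ∈ F, ∃ G ∈ F, G ⊆ upSet G1 ∩ upSet G2

/-- `ℱ →_τ x`: every open set containing `x` contains a member of `ℱ`. -/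
def FConv [TopologicalSpace X] (F : Set (Set X)) (x : X) : Prop :=
  ∀ U : Set X, IsOpen U → x ∈ U → ∃ G ∈ F, G ⊆ U

/-- IGS-convergence. -/
def IGSConv [TopologicalSpace X] {J : Type v} (xj : J → X) (I : Set (Set J)) (x : X) : Prop :=
  ∃ F : Set (Set X), DirFam F ∧ FConv F x ∧ ∀ G ∈ F, {j | xj j ∉ upSet G} ∈ I

/-- IGSL-convergence. -/
def IGSLConv [TopologicalSpace X] {J : Type v} (xj : J → X) (I : Set (Set J)) (x : X) : Prop :=
  IGSConv xj I x ∧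
    ∀ G : Set X, G.Finite → G.Nonempty → {j | xj j ∉ upSet G} ∈ I → x ∈ upSet G

/-- The Lawson topology: generated by the open sets of `τ` and complements of `↑y`. -/
def lawson (X : Type u) [TopologicalSpace X] : TopologicalSpace X :=
  TopologicalSpace.generateFrom {V | IsOpen V ∨ ∃ y : X, V = (upSet {y})ᶜ}

/-- The family `IS(X)`. -/
def memIS (X : Type u) [TopologicalSpace X] (U : Set X) : Prop :=
  ∀ (J : Type u) [Preorder J], Nonempty J → (∀ a b : J, ∃ c, a ≤ c ∧ b ≤ c) →
    ∀ (xj : J → X) (I : Set (Set J)), IsIdeal I →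
      ∀ x ∈ U, ISConv xj I x → {j | xj j ∉ U} ∈ I

/-- The family `IGS(X)`. -/
def memIGS (X : Type u) [TopologicalSpace X] (U : Set X) : Prop :=
  ∀ (J : Type u) [Preorder J], Nonempty J → (∀ a b : J, ∃ c, a ≤ c ∧ b ≤ c) →
    ∀ (xj : J → X) (I : Set (Set J)), IsIdeal I →
      ∀ x ∈ U, IGSConv xj I x → {j | xj j ∉ U} ∈ I

/-! If `x ∈ cl A`, look at the lower subsets `C ⊆ ↓A` meeting every finite `F` with
`x ∈ int ↑F`. The set `↓A` is one of them, and since each `F` is finite the family is closed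
under intersections of chains, so Zorn's lemma gives a minimal member `M`. By minimality, for
every `a ∈ M` the smaller lower set `M \ ↑a` misses some such `F`, i.e. `M ∩ F ⊆ ↑a`.
Local hypercompactness refines the sets `F` chosen for `a` and `b` to a single one meeting `M`
in a common upper bound of `a` and `b`, so `M` is directed; it converges to `x` by local
hypercompactness again. The inclusion `Â ⊆ cl A` holds in every space, since open sets are
upper sets in the specialization order. -/

theorem IsChain.sInter_inter_nonempty_of_finite {α : Type*} {c : Set (Set α)}
    (hc : IsChain (· ⊆ ·) c) (hne : c.Nonempty) {F : Set α} (hF : F.Finite)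
    (hmeet : ∀ C ∈ c, (C ∩ F).Nonempty) : (⋂₀ c ∩ F).Nonempty := by
  by_contra hempty
  have hcover : F ⊆ ⋃₀ (compl '' c) := fun f hf => by
    by_contra hf'
    simp only [sUnion_image, mem_iUnion, mem_compl_iff, not_exists, not_not] at hf'
    exact hempty ⟨f, fun C hC => hf' C hC, hf⟩
  have hdir : DirectedOn (· ⊆ ·) (compl '' c) := by
    rintro _ ⟨s, hs, rfl⟩ _ ⟨t, ht, rfl⟩
    rcases hc.total hs ht with hst | hts
    · exact ⟨sᶜ, mem_image_of_mem _ hs, subset_rfl, compl_subset_compl.2 hst⟩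
    · exact ⟨tᶜ, mem_image_of_mem _ ht, compl_subset_compl.2 hts, subset_rfl⟩
  obtain ⟨_, ⟨C, hC, rfl⟩, hFC⟩ :=
    hdir.exists_mem_subset_of_finite_of_subset_sUnion (hne.image _) hF hcover
  obtain ⟨f, hfC, hfF⟩ := hmeet C hC
  exact hFC hfF hfC

section

variable [TopologicalSpace X]

theorem sle_refl (x : X) : sle x x := subset_closure rfl

theorem sle_trans {x y z : X} (hxy : sle x y) (hyz : sle y z) : sle x z :=
  closure_minimal (singleton_subset_iff.2 hyz) isClosed_closure hxy

theorem IsOpen.mem_of_sle {U : Set X} (hU : IsOpen U) {x y : X} (hxy : sle x y) (hx : x ∈ U) :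
    y ∈ U := by
  obtain ⟨_, hyU, rfl⟩ := mem_closure_iff.1 hxy U hU hx
  exact hyU

theorem hatSet_subset_closure (A : Set X) : hatSet A ⊆ closure A := by
  rintro x ⟨D, -, hDA, hDx⟩
  refine mem_closure_iff.2 fun U hU hxU => ?_
  obtain ⟨d, hdD, hdU⟩ := hDx U hU hxU
  obtain ⟨a, haA, hda⟩ := hDA hdD
  exact ⟨a, hU.mem_of_sle hda hdU, haA⟩

def MeetsHypercompactNhds (x : X) (C : Set X) : Prop :=
  ∀ F : Set X, F.Finite → x ∈ interior (upSet F) → (C ∩ F).Nonempty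

def hatWitnesses (A : Set X) (x : X) : Set (Set X) :=
  {C | C ⊆ downSet A ∧ downSet C ⊆ C ∧ MeetsHypercompactNhds x C}

variable {A : Set X} {x : X}

theorem downSet_mem_hatWitnesses (hx : x ∈ closure A) : downSet A ∈ hatWitnesses A x := by
  refine ⟨Subset.rfl, ?_, fun F _ hxF => ?_⟩
  · rintro m ⟨m', ⟨a, haA, hm'a⟩, hmm'⟩
    exact ⟨a, haA, sle_trans hmm' hm'a⟩
  · obtain ⟨a, haF, haA⟩ := mem_closure_iff.1 hx _ isOpen_interior hxF
    obtain ⟨f, hfF, hfa⟩ := interior_subset haF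
    exact ⟨f, ⟨a, haA, hfa⟩, hfF⟩

theorem sInter_mem_hatWitnesses {c : Set (Set X)} (hcW : c ⊆ hatWitnesses A x)
    (hc : IsChain (· ⊆ ·) c) (hne : c.Nonempty) : ⋂₀ c ∈ hatWitnesses A x := by
  obtain ⟨C₀, hC₀⟩ := hne
  refine ⟨(sInter_subset_of_mem hC₀).trans (hcW hC₀).1, ?_, fun F hF hxF => ?_⟩
  · rintro m ⟨m', hm', hmm'⟩ C hC
    exact (hcW hC).2.1 ⟨m', hm' C hC, hmm'⟩
  · exact hc.sInter_inter_nonempty_of_finite ⟨C₀, hC₀⟩ hF fun C hC => (hcW hC).2.2 F hF hxF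

theorem exists_minimal_hatWitness (hx : x ∈ closure A) :
    ∃ M, Minimal (· ∈ hatWitnesses A x) M := by
  obtain ⟨M, -, hM⟩ := zorn_superset_nonempty _
    (fun c hcW hc hne => ⟨⋂₀ c, sInter_mem_hatWitnesses hcW hc hne,
      fun _ => sInter_subset_of_mem⟩) _ (downSet_mem_hatWitnesses hx)
  exact ⟨M, hM⟩

theorem Minimal.exists_inter_subset_upSet {M : Set X} (hM : Minimal (· ∈ hatWitnesses A x) M)
    {a : X} (ha : a ∈ M) :
    ∃ F : Set X, F.Finite ∧ x ∈ interior (upSet F) ∧ M ∩ F ⊆ upSet {a} := by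
  by_contra! hmiss
  set M' := {m ∈ M | ¬ sle a m}
  have hM'M : M' ⊆ M := fun m hm => hm.1
  have hM' : M' ∈ hatWitnesses A x := by
    refine ⟨hM'M.trans hM.prop.1, ?_, fun F hF hxF => ?_⟩
    · rintro m ⟨m', ⟨hm'M, ham'⟩, hmm'⟩
      exact ⟨hM.prop.2.1 ⟨m', hm'M, hmm'⟩, fun ham => ham' (sle_trans ham hmm')⟩
    · obtain ⟨m, ⟨hmM, hmF⟩, hma⟩ := not_subset.1 (hmiss F hF hxF)
      exact ⟨m, ⟨hmM, fun ham => hma ⟨a, rfl, ham⟩⟩, hmF⟩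
  exact (hM.le_of_le hM' hM'M ha).2 (sle_refl a)

theorem Minimal.dConv_of_hatWitness (hlh : LocallyHypercompact X) {M : Set X}
    (hM : Minimal (· ∈ hatWitnesses A x) M) : DConv M x := by
  intro U hU hxU
  obtain ⟨F, hF, -, hxF, hFU⟩ := hlh U hU x hxU
  obtain ⟨m, hmM, hmF⟩ := hM.prop.2.2 F hF hxF
  exact ⟨m, hmM, hFU ⟨m, hmF, sle_refl m⟩⟩

theorem Minimal.dirSet_of_hatWitness (hlh : LocallyHypercompact X) {M : Set X}
    (hM : Minimal (· ∈ hatWitnesses A x) M) : DirSet M := by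
  refine ⟨?_, fun a ha b hb => ?_⟩
  · obtain ⟨m, hm, -⟩ := hM.dConv_of_hatWitness hlh univ isOpen_univ (mem_univ x)
    exact ⟨m, hm⟩
  obtain ⟨Fa, -, hxFa, hMFa⟩ := hM.exists_inter_subset_upSet ha
  obtain ⟨Fb, -, hxFb, hMFb⟩ := hM.exists_inter_subset_upSet hb
  obtain ⟨F, hF, -, hxF, hFab⟩ :=
    hlh _ (isOpen_interior.inter isOpen_interior) x ⟨hxFa, hxFb⟩
  obtain ⟨m, hmM, hmF⟩ := hM.prop.2.2 F hF hxF
  obtain ⟨⟨fa, hfaFa, hfam⟩, ⟨fb, hfbFb, hfbm⟩⟩ :=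
    (hFab ⟨m, hmF, sle_refl m⟩).imp (fun h => interior_subset h) (fun h => interior_subset h)
  obtain ⟨_, rfl, hafa⟩ := hMFa ⟨hM.prop.2.1 ⟨m, hmM, hfam⟩, hfaFa⟩
  obtain ⟨_, rfl, hbfb⟩ := hMFb ⟨hM.prop.2.1 ⟨m, hmM, hfbm⟩, hfbFb⟩
  exact ⟨m, hmM, sle_trans hafa hfam, sle_trans hbfb hfbm⟩

theorem closure_subset_hatSet (hlh : LocallyHypercompact X) (A : Set X) :
    closure A ⊆ hatSet A := by
  intro x hx
  obtain ⟨M, hM⟩ := exists_minimal_hatWitness hx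
  exact ⟨M, hM.dirSet_of_hatWitness hlh, hM.prop.1, hM.dConv_of_hatWitness hlh⟩

end

theorem stmt_7_general [TopologicalSpace X] (hlh : LocallyHypercompact X) : WeakOneStepClosure X :=
  fun A => (hatSet_subset_closure A).antisymm (closure_subset_hatSet hlh A)

/-- Every monotone determined locally hypercompact space has weak
one-step closure. -/
theorem stmt_7 [TopologicalSpace X] [T0Space X] (hX : MonDet X)
    (hlh : LocallyHypercompact X) :
    WeakOneStepClosure X :=
  stmt_7_general hlh
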